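/- In the homotopy braid group B̂₃, for all integers α, β, γ, δ, the element g = b₁₂^α b₁₃^β b₂₃^γ z^δ σ₂ satisfies g² = b₁₂^{α+β} b₁₃^{α+β} b₂₃^{2γ+1} z^{αγ + β(β - γ + α - 1)}, where z = [b₂₃, b₁₃]. -/

import Mathlib

/-- The commutator `[x, y] = x⁻¹ y⁻¹ x y` used in the paper. -/
def pcomm {G : Type*} [Group G] (x y : G) : G := x⁻¹ * y⁻¹ * x * y

/-- The braid relation `σ₁σ₂σ₁ = σ₂σ₁σ₂` on two generators. -/
def braidRel3 : Set (FreeGroup (Fin 2)) :=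
  { FreeGroup.of 0 * FreeGroup.of 1 * FreeGroup.of 0 *
      (FreeGroup.of 1 * FreeGroup.of 0 * FreeGroup.of 1)⁻¹ }

/-- The braid group `B₃`. -/
abbrev B3 := PresentedGroup braidRel3

/-- The generator `σ₁` of `B₃`. -/
def s1 : B3 := PresentedGroup.of 0
/-- The generator `σ₂` of `B₃`. -/
def s2 : B3 := PresentedGroup.of 1
/-- `a₁₂ = σ₁²`. -/
def a12 : B3 := s1 ^ 2
/-- `a₁₃ = σ₂σ₁²σ₂⁻¹`. -/
def a13 : B3 := s2 * s1 ^ 2 * s2⁻¹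
/-- `a₂₃ = σ₂²`. -/
def a23 : B3 := s2 ^ 2

/-- The homotopy relations in `B₃`: `[a₁₃, g⁻¹a₁₃g]` and `[a₂₃, g⁻¹a₂₃g]` for `g`
in the subgroup generated by `a₁₃` and `a₂₃`. -/
def homotopyRels3 : Set B3 :=
  { x | ∃ g ∈ Subgroup.closure {a13, a23},
        x = pcomm a13 (g⁻¹ * a13 * g) ∨ x = pcomm a23 (g⁻¹ * a23 * g) }

/-- The homotopy braid group `B̂₃`. -/
abbrev HB3 := B3 ⧸ Subgroup.normalClosure homotopyRels3

/-- The canonical projection `B₃ → B̂₃`. -/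
def pr : B3 →* HB3 := QuotientGroup.mk' _

/-- The image of `σ₁` in `B̂₃`. -/
def t1 : HB3 := pr s1
/-- The image of `σ₂` in `B̂₃`. -/
def t2 : HB3 := pr s2
/-- The image `b₁₂` of `a₁₂` in `B̂₃`. -/
def b12 : HB3 := pr a12
/-- The image `b₁₃` of `a₁₃` in `B̂₃`. -/
def b13 : HB3 := pr a13
/-- The image `b₂₃` of `a₂₃` in `B̂₃`. -/
def b23 : HB3 := pr a23
/-- `z = [b₂₃, b₁₃]`. -/
def zz : HB3 := pcomm b23 b13

/-!
Write `A, B, C` for `b₁₂, b₁₃, b₂₃`. The homotopy relations make `z = [C, B]` commute with `B`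
and `C`; since `ABC` is the image of the central full twist `(σ₁σ₂σ₁)²`, `z` also commutes with
`A`, and `[B, A] = z`, `[C, A] = z⁻¹`. So products of powers of `A, B, C, z` have a normal form
`A^a B^b C^c z^d` multiplying by a Heisenberg-type law. Conjugation by `σ₂` acts by
`A ↦ B`, `B ↦ A z⁻¹`, `C ↦ C`, `z ↦ z⁻¹`, and `σ₂² = C`; hence with `w = A^α B^β C^γ z^δ`,
`g² = w · (σ₂ w σ₂⁻¹) · σ₂²` is a product of three normal forms.
-/

section Commutators

variable {G : Type*} [Group G]

theorem pcomm_eq_iff {x y c : G} : pcomm y x = c ↔ y * x = x * y * c := by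
  rw [pcomm, show y⁻¹ * x⁻¹ * y * x = (x * y)⁻¹ * (y * x) by group, inv_mul_eq_iff_eq_mul]

theorem pcomm_eq_one_iff {x y : G} : pcomm x y = 1 ↔ Commute x y := by
  rw [pcomm_eq_iff, mul_one]
  rfl

theorem map_pcomm {H F : Type*} [Group H] [FunLike F G H] [MonoidHomClass F G H] (f : F)
    (x y : G) : f (pcomm x y) = pcomm (f x) (f y) := by
  simp only [pcomm, map_mul, map_inv]

theorem mul_zpow_eq_of_mul_eq {a x c : G} (h : a * x = x * c * a) (hc : Commute x c) (n : ℤ) :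
    a * x ^ n = x ^ n * c ^ n * a := by
  have := (show SemiconjBy a x (x * c) from h).zpow_right n
  rwa [hc.mul_zpow] at this

theorem zpow_mul_zpow_eq_of_pcomm_eq {x y c : G} (h : pcomm y x = c) (hx : Commute c x)
    (hy : Commute c y) (m n : ℤ) : y ^ m * x ^ n = x ^ n * y ^ m * c ^ (m * n) := by
  rw [pcomm_eq_iff] at h
  have hinv : x⁻¹ * y = y * c * x⁻¹ := by
    rw [inv_mul_eq_iff_eq_mul, ← mul_assoc, ← mul_assoc, ← h]
    group
  have hm : y ^ m * x = x * c ^ m * y ^ m :=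
    calc y ^ m * x = x * (x⁻¹ * y ^ m) * x := by group
      _ = x * (y ^ m * c ^ m * x⁻¹) * x := by rw [mul_zpow_eq_of_mul_eq hinv hy.symm m]
      _ = x * (y ^ m * c ^ m) := by group
      _ = x * c ^ m * y ^ m := by rw [(hy.zpow_zpow m m).symm.eq, mul_assoc]
  calc y ^ m * x ^ n = x ^ n * (c ^ m) ^ n * y ^ m :=
        mul_zpow_eq_of_mul_eq hm (hx.symm.zpow_right m) n
    _ = x ^ n * y ^ m * c ^ (m * n) := by
      rw [← zpow_mul, mul_assoc, (hy.zpow_zpow (m * n) m).eq, mul_assoc]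

end Commutators

section BraidGroup

theorem s1_mul_s2_mul_s1 : s1 * s2 * s1 = s2 * s1 * s2 := by
  have h : PresentedGroup.mk braidRel3 (FreeGroup.of 0 * FreeGroup.of 1 * FreeGroup.of 0 *
      (FreeGroup.of 1 * FreeGroup.of 0 * FreeGroup.of 1)⁻¹) = 1 :=
    (QuotientGroup.eq_one_iff _).mpr (Subgroup.subset_normalClosure rfl)
  simp only [map_mul, map_inv, mul_inv_eq_one] at h
  exact h

theorem s1_mul_s2_mul_s1_sq_mem_center : (s1 * s2 * s1) ^ 2 ∈ Subgroup.center B3 := by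
  have h1 : SemiconjBy (s1 * s2 * s1) s1 s2 :=
    calc s1 * s2 * s1 * s1 = s2 * s1 * s2 * s1 := by rw [s1_mul_s2_mul_s1]
      _ = s2 * (s1 * s2 * s1) := by group
  have h2 : SemiconjBy (s1 * s2 * s1) s2 s1 :=
    calc s1 * s2 * s1 * s2 = s1 * (s2 * s1 * s2) := by group
      _ = s1 * (s1 * s2 * s1) := by rw [s1_mul_s2_mul_s1]
  rw [← Subgroup.centralizer_univ, ← Subgroup.coe_top, ← PresentedGroup.closure_range_of,
    Subgroup.centralizer_closure, Subgroup.mem_centralizer_iff, pow_two]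
  rintro _ ⟨i, rfl⟩
  fin_cases i
  exacts [(h2.mul_left h1).eq.symm, (h1.mul_left h2).eq.symm]

theorem a12_mul_a13_mul_a23 : a12 * a13 * a23 = (s1 * s2 * s1) ^ 2 :=
  calc a12 * a13 * a23 = s1 * (s1 * s2 * s1) * (s1 * s2) := by
        simp only [a12, a13, a23, pow_two]; group
    _ = s1 * (s2 * s1 * s2) * (s1 * s2) := by rw [s1_mul_s2_mul_s1]
    _ = (s1 * s2 * s1) * (s2 * s1 * s2) := by group
    _ = (s1 * s2 * s1) ^ 2 := by rw [← s1_mul_s2_mul_s1, pow_two]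

theorem s2_mul_a12_mul_s2_inv : s2 * a12 * s2⁻¹ = a13 := rfl

theorem s2_mul_a13_mul_s2_inv : s2 * a13 * s2⁻¹ = a23 * a12 * a23⁻¹ := by
  simp only [a12, a13, a23, pow_two]; group

theorem s2_mul_a23_mul_s2_inv : s2 * a23 * s2⁻¹ = a23 := by
  simp only [a23]; group

end BraidGroup

section HomotopyBraidGroup

theorem pr_eq_one_of_mem_homotopyRels3 {x : B3} (hx : x ∈ homotopyRels3) : pr x = 1 :=
  (QuotientGroup.eq_one_iff _).mpr (Subgroup.subset_normalClosure hx)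

theorem commute_b13_inv_b23_mul_b13_mul_b23 : Commute b13 (b23⁻¹ * b13 * b23) := by
  rw [← pcomm_eq_one_iff, b13, b23, ← map_inv, ← map_mul, ← map_mul, ← map_pcomm]
  exact pr_eq_one_of_mem_homotopyRels3 ⟨a23, Subgroup.subset_closure (by simp), Or.inl rfl⟩

theorem commute_b23_inv_b13_mul_b23_mul_b13 : Commute b23 (b13⁻¹ * b23 * b13) := by
  rw [← pcomm_eq_one_iff, b13, b23, ← map_inv, ← map_mul, ← map_mul, ← map_pcomm]
  exact pr_eq_one_of_mem_homotopyRels3 ⟨a13, Subgroup.subset_closure (by simp), Or.inr rfl⟩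

theorem commute_zz_b13 : Commute zz b13 := by
  rw [show zz = (b23⁻¹ * b13 * b23)⁻¹ * b13 by simp only [zz, pcomm]; group]
  exact commute_b13_inv_b23_mul_b13_mul_b23.symm.inv_left.mul_left (Commute.refl b13)

theorem commute_zz_b23 : Commute zz b23 := by
  rw [show zz = b23⁻¹ * (b13⁻¹ * b23 * b13) by simp only [zz, pcomm]; group]
  exact (Commute.refl b23).inv_left.mul_left commute_b23_inv_b13_mul_b23_mul_b13.symm

theorem b12_mul_b13_mul_b23_mem_center : b12 * b13 * b23 ∈ Subgroup.center HB3 := by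
  rw [Subgroup.mem_center_iff]
  intro g
  obtain ⟨g, rfl⟩ : ∃ x, pr x = g := QuotientGroup.mk'_surjective _ g
  have h := Subgroup.mem_center_iff.mp s1_mul_s2_mul_s1_sq_mem_center g
  rw [← a12_mul_a13_mul_a23] at h
  simpa only [b12, b13, b23, map_mul] using congrArg pr h

theorem exists_mem_center_b12_eq : ∃ D ∈ Subgroup.center HB3, b12 = D * b23⁻¹ * b13⁻¹ :=
  ⟨_, b12_mul_b13_mul_b23_mem_center, by group⟩

theorem commute_zz_b12 : Commute zz b12 := by
  obtain ⟨D, hD, hb12⟩ := exists_mem_center_b12_eq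
  rw [hb12]
  have hzD : Commute zz D := Subgroup.mem_center_iff.mp hD zz
  exact (hzD.mul_right commute_zz_b23.inv_right).mul_right commute_zz_b13.inv_right

theorem pcomm_b13_b12 : pcomm b13 b12 = zz := by
  obtain ⟨D, hD, hb12⟩ := exists_mem_center_b12_eq
  rw [pcomm_eq_iff, hb12]
  calc b13 * (D * b23⁻¹ * b13⁻¹) = D * (b13 * b23⁻¹ * b13⁻¹) := by
        rw [← mul_assoc, ← mul_assoc, Subgroup.mem_center_iff.mp hD b13]; group
    _ = D * (b23⁻¹ * (b23 * b13 * zz * (b23 * b13)⁻¹)) := by simp only [zz, pcomm]; group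
    _ = D * b23⁻¹ * b13⁻¹ * b13 * zz := by
        rw [(commute_zz_b23.mul_right commute_zz_b13).symm.mul_inv_cancel]; group

theorem pcomm_b23_b12 : pcomm b23 b12 = zz⁻¹ := by
  obtain ⟨D, hD, hb12⟩ := exists_mem_center_b12_eq
  rw [pcomm_eq_iff, hb12]
  calc b23 * (D * b23⁻¹ * b13⁻¹) = D * b13⁻¹ := by
        rw [← mul_assoc, ← mul_assoc, Subgroup.mem_center_iff.mp hD b23]; group
    _ = D * (zz * b13⁻¹ * zz⁻¹) := by rw [commute_zz_b13.inv_right.mul_inv_cancel]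
    _ = D * b23⁻¹ * b13⁻¹ * b23 * zz⁻¹ := by simp only [zz, pcomm]; group

end HomotopyBraidGroup

section NormalForm

theorem b13_zpow_mul_b12_zpow (m n : ℤ) : b13 ^ m * b12 ^ n = b12 ^ n * b13 ^ m * zz ^ (m * n) :=
  zpow_mul_zpow_eq_of_pcomm_eq pcomm_b13_b12 commute_zz_b12 commute_zz_b13 m n

theorem b23_zpow_mul_b12_zpow (m n : ℤ) :
    b23 ^ m * b12 ^ n = b12 ^ n * b23 ^ m * zz ^ (-(m * n)) := by
  rw [← inv_zpow']
  exact zpow_mul_zpow_eq_of_pcomm_eq pcomm_b23_b12 commute_zz_b12.inv_left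
    commute_zz_b23.inv_left m n

theorem b23_zpow_mul_b13_zpow (m n : ℤ) : b23 ^ m * b13 ^ n = b13 ^ n * b23 ^ m * zz ^ (m * n) :=
  zpow_mul_zpow_eq_of_pcomm_eq rfl commute_zz_b13 commute_zz_b23 m n

def normalWord (a b c d : ℤ) : HB3 := b12 ^ a * b13 ^ b * b23 ^ c * zz ^ d

variable (a b c d : ℤ)

theorem normalWord_mul_b12_zpow (n : ℤ) :
    normalWord a b c d * b12 ^ n = normalWord (a + n) b c (d + b * n - c * n) :=
  calc b12 ^ a * b13 ^ b * b23 ^ c * zz ^ d * b12 ^ n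
      = b12 ^ a * b13 ^ b * (b23 ^ c * b12 ^ n) * zz ^ d := by
        rw [mul_assoc _ (zz ^ d), (commute_zz_b12.zpow_zpow d n).eq]; group
    _ = b12 ^ a * (b13 ^ b * b12 ^ n) * b23 ^ c * zz ^ (-(c * n)) * zz ^ d := by
        rw [b23_zpow_mul_b12_zpow]; group
    _ = b12 ^ a * b12 ^ n * b13 ^ b * (zz ^ (b * n) * b23 ^ c) * zz ^ (-(c * n)) * zz ^ d := by
        rw [b13_zpow_mul_b12_zpow]; group
    _ = normalWord (a + n) b c (d + b * n - c * n) := by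
        rw [(commute_zz_b23.zpow_zpow _ _).eq, normalWord]; group

theorem normalWord_mul_b13_zpow (n : ℤ) :
    normalWord a b c d * b13 ^ n = normalWord a (b + n) c (d + c * n) :=
  calc b12 ^ a * b13 ^ b * b23 ^ c * zz ^ d * b13 ^ n
      = b12 ^ a * b13 ^ b * (b23 ^ c * b13 ^ n) * zz ^ d := by
        rw [mul_assoc _ (zz ^ d), (commute_zz_b13.zpow_zpow d n).eq]; group
    _ = normalWord a (b + n) c (d + c * n) := by
        rw [b23_zpow_mul_b13_zpow, normalWord]; group

theorem normalWord_mul_b23_zpow (n : ℤ) :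
    normalWord a b c d * b23 ^ n = normalWord a b (c + n) d := by
  rw [normalWord, normalWord, mul_assoc _ (zz ^ d), (commute_zz_b23.zpow_zpow d n).eq]; group

theorem normalWord_mul_zz_zpow (n : ℤ) :
    normalWord a b c d * zz ^ n = normalWord a b c (d + n) := by
  rw [normalWord, normalWord, mul_assoc, ← zpow_add]

theorem normalWord_mul (a' b' c' d' : ℤ) :
    normalWord a b c d * normalWord a' b' c' d' =
      normalWord (a + a') (b + b') (c + c') (d + b * a' - c * a' + c * b' + d') := by
  calc normalWord a b c d * normalWord a' b' c' d'
      = normalWord a b c d * b12 ^ a' * b13 ^ b' * b23 ^ c' * zz ^ d' := by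
        simp only [normalWord, mul_assoc]
    _ = _ := by
        rw [normalWord_mul_b12_zpow, normalWord_mul_b13_zpow, normalWord_mul_b23_zpow,
          normalWord_mul_zz_zpow]

end NormalForm

section ConjugationBySigma2

theorem conj_t2_pr (x : B3) : MulAut.conj t2 (pr x) = pr (s2 * x * s2⁻¹) := by
  simp only [MulAut.conj_apply, t2, map_mul, map_inv]

theorem conj_t2_b12 : MulAut.conj t2 b12 = b13 := by
  rw [b12, conj_t2_pr, s2_mul_a12_mul_s2_inv, b13]

theorem conj_t2_b23 : MulAut.conj t2 b23 = b23 := by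
  rw [b23, conj_t2_pr, s2_mul_a23_mul_s2_inv]

theorem conj_t2_b13 : MulAut.conj t2 b13 = b12 * zz⁻¹ := by
  rw [b13, conj_t2_pr, s2_mul_a13_mul_s2_inv, map_mul, map_mul, map_inv, ← b12, ← b23,
    pcomm_eq_iff.mp pcomm_b23_b12, mul_assoc b12, mul_assoc b12,
    commute_zz_b23.symm.inv_right.mul_inv_cancel]

theorem conj_t2_zz : MulAut.conj t2 zz = zz⁻¹ := by
  conv_lhs => rw [zz]
  rw [map_pcomm, conj_t2_b23, conj_t2_b13, pcomm_eq_iff, ← mul_assoc,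
    pcomm_eq_iff.mp pcomm_b23_b12, mul_assoc b12 zz⁻¹, commute_zz_b23.inv_left.eq, ← mul_assoc]

theorem conj_t2_normalWord (a b c d : ℤ) :
    MulAut.conj t2 (normalWord a b c d) = normalWord b a c (a * b - b - d) :=
  calc MulAut.conj t2 (normalWord a b c d)
      = b13 ^ a * (b12 * zz⁻¹) ^ b * b23 ^ c * zz⁻¹ ^ d := by
        simp only [normalWord, map_mul, map_zpow, conj_t2_b12, conj_t2_b13, conj_t2_b23,
          conj_t2_zz]
    _ = b13 ^ a * b12 ^ b * (zz ^ (-b) * b23 ^ c) * zz ^ (-d) := by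
        rw [commute_zz_b12.symm.inv_right.mul_zpow, inv_zpow', inv_zpow']; group
    _ = normalWord 0 a 0 0 * normalWord b 0 c (-b - d) := by
        rw [(commute_zz_b23.zpow_zpow _ _).eq]
        simp only [normalWord, zpow_zero, one_mul, mul_one]
        group
    _ = normalWord b a c (a * b - b - d) := by
        rw [normalWord_mul]
        congr 1 <;> ring

theorem t2_mul_t2 : t2 * t2 = normalWord 0 0 1 0 := by
  simp only [normalWord, zpow_zero, zpow_one, one_mul, mul_one, b23, a23, t2, pow_two, map_mul]

end ConjugationBySigma2

/-- The square of `g = b₁₂^α b₁₃^β b₂₃^γ z^δ σ₂` in `B̂₃`. -/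
theorem square_formula (α β γ δ : ℤ) :
    (b12 ^ α * b13 ^ β * b23 ^ γ * zz ^ δ * t2) ^ 2 =
      b12 ^ (α + β) * b13 ^ (α + β) * b23 ^ (2 * γ + 1) *
        zz ^ (α * γ + β * (β - γ + α - 1)) :=
  calc (b12 ^ α * b13 ^ β * b23 ^ γ * zz ^ δ * t2) ^ 2
      = normalWord α β γ δ * MulAut.conj t2 (normalWord α β γ δ) * (t2 * t2) := by
        rw [pow_two, MulAut.conj_apply, normalWord]; group
    _ = normalWord (α + β) (α + β) (2 * γ + 1) (α * γ + β * (β - γ + α - 1)) := by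
        rw [conj_t2_normalWord, t2_mul_t2, normalWord_mul, normalWord_mul]
        congr 1 <;> ring
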